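/- (Explicit rank-3 preservation of the BCD/RCD update; Corollary 1 made concrete.) Let n ≥ 2, let R' ∈ ℝ^{3(n−1)×3} be the column-stacking of orthogonal matrices R'₁,…,R'_{n−1} ∈ O(3), let C ∈ ℝ^{3(n−1)×3}, set B = R' R'ᵀ and M = R'ᵀ C ∈ ℝ^{3×3}, and assume M is invertible. Define X* = B C ((Cᵀ B C)^{1/2})^† and U = M (Mᵀ M)^{−1/2}. Then: (a) U is orthogonal (Uᵀ U = I₃); (b) X* = R' U; and (c) the updated matrix Y = [[I₃, X*ᵀ], [X*, B]] ∈ ℝ^{3n×3n} factorizes as Y = Q Qᵀ, where Q ∈ ℝ^{3n×3} is the column-stacking of Q₁ = Uᵀ and Q_{i+1} = R'_i for i = 1,…,n−1, and every block Q_i is orthogonal. -/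

import Mathlib

open Matrix

attribute [local instance] Classical.propDecidable

/-- Column-stacking `[A₁ᵀ ⋯ Aₘᵀ]ᵀ ∈ ℝ^{3m×3}` of 3×3 matrices. -/
def stack {m : ℕ} (As : Fin m → Matrix (Fin 3) (Fin 3) ℝ) :
    Matrix (Fin m × Fin 3) (Fin 3) ℝ :=
  fun p b => As p.1 p.2 b

/-- The unique positive semidefinite square root of a positive semidefinite real matrix
(junk value `0` if the matrix is not positive semidefinite). -/
noncomputable def psqrt {ι : Type*} [Fintype ι] [DecidableEq ι]
    (M : Matrix ι ι ℝ) : Matrix ι ι ℝ :=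
  if h : ∃ N : Matrix ι ι ℝ, N.PosSemidef ∧ N * N = M then h.choose else 0

/-- The Moore–Penrose pseudoinverse of a square real matrix, characterized by the four
Penrose conditions (junk value `0` if no such matrix exists). -/
noncomputable def pinv {ι : Type*} [Fintype ι] [DecidableEq ι]
    (M : Matrix ι ι ℝ) : Matrix ι ι ℝ :=
  if h : ∃ N : Matrix ι ι ℝ,
      M * N * M = M ∧ N * M * N = N ∧ (M * N)ᵀ = M * N ∧ (N * M)ᵀ = N * M then
    h.choose
  else 0

/-!
`Cᵀ B C = Mᵀ M` with `M = R'ᵀ C`, so `S = (Cᵀ B C)^{1/2} = (Mᵀ M)^{1/2}` is invertible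
(`det S ^ 2 = det M ^ 2 ≠ 0`); hence `S^† = S⁻¹` and `X* = R' R'ᵀ C S⁻¹ = R' U`. The polar factor
`U = M S⁻¹` is orthogonal because `Uᵀ U = S⁻¹ (Mᵀ M) S⁻¹ = S⁻¹ S S S⁻¹`. Stacking `Uᵀ` on top of
`R'` then gives `Q Qᵀ = [[Uᵀ U, (R' U)ᵀ], [R' U, R' R'ᵀ]] = Y`.
-/

open scoped MatrixOrder

section

variable {ι κ : Type*} [Fintype ι] [DecidableEq ι]

theorem psqrt_spec {A : Matrix ι ι ℝ} (hA : A.PosSemidef) :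
    (psqrt A).PosSemidef ∧ psqrt A * psqrt A = A := by
  have hex : ∃ N : Matrix ι ι ℝ, N.PosSemidef ∧ N * N = A :=
    ⟨CFC.sqrt A, (CFC.sqrt_nonneg A).posSemidef, CFC.sqrt_mul_sqrt_self A hA.nonneg⟩
  rw [psqrt, dif_pos hex]
  exact hex.choose_spec

theorem pinv_eq_inv {A : Matrix ι ι ℝ} (hA : IsUnit A.det) : pinv A = A⁻¹ := by
  have hex : ∃ N : Matrix ι ι ℝ,
      A * N * A = A ∧ N * A * N = N ∧ (A * N)ᵀ = A * N ∧ (N * A)ᵀ = N * A :=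
    ⟨A⁻¹, by simp [mul_nonsing_inv A hA], by simp [nonsing_inv_mul A hA],
      by simp [mul_nonsing_inv A hA], by simp [nonsing_inv_mul A hA]⟩
  have hANA : A * pinv A * A = A := by
    rw [pinv, dif_pos hex]
    exact hex.choose_spec.1
  calc pinv A = A⁻¹ * (A * pinv A * A) * A⁻¹ := by
        simp only [Matrix.mul_assoc, mul_nonsing_inv A hA, Matrix.mul_one,
          ← Matrix.mul_assoc A⁻¹, nonsing_inv_mul A hA, Matrix.one_mul]
    _ = A⁻¹ := by rw [hANA, nonsing_inv_mul A hA, Matrix.one_mul]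

theorem psqrt_transpose_mul_self_spec (M : Matrix ι ι ℝ) :
    (psqrt (Mᵀ * M)).PosSemidef ∧ psqrt (Mᵀ * M) * psqrt (Mᵀ * M) = Mᵀ * M :=
  psqrt_spec (by simpa using posSemidef_conjTranspose_mul_self M)

theorem isUnit_det_psqrt_transpose_mul_self {M : Matrix ι ι ℝ} (hM : IsUnit M.det) :
    IsUnit (psqrt (Mᵀ * M)).det := by
  have hsq := congrArg det (psqrt_transpose_mul_self_spec M).2
  rw [det_mul, det_mul, det_transpose] at hsq
  exact isUnit_of_mul_isUnit_left (hsq ▸ hM.mul hM)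

noncomputable def polarFactor (M : Matrix ι ι ℝ) : Matrix ι ι ℝ :=
  M * (psqrt (Mᵀ * M))⁻¹

theorem polarFactor_transpose_mul_self {M : Matrix ι ι ℝ} (hM : IsUnit M.det) :
    (polarFactor M)ᵀ * polarFactor M = 1 := by
  unfold polarFactor
  obtain ⟨hS, hSS⟩ := psqrt_transpose_mul_self_spec M
  set S := psqrt (Mᵀ * M)
  have hdet : IsUnit S.det := isUnit_det_psqrt_transpose_mul_self hM
  have hSinv : (S⁻¹)ᵀ = S⁻¹ := by
    rw [transpose_nonsing_inv, ← conjTranspose_eq_transpose_of_trivial, hS.isHermitian.eq]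
  calc (M * S⁻¹)ᵀ * (M * S⁻¹) = S⁻¹ * (Mᵀ * M) * S⁻¹ := by
        simp only [transpose_mul, hSinv, Matrix.mul_assoc]
    _ = 1 := by
        rw [← hSS, nonsing_inv_mul_cancel_left S S hdet, mul_nonsing_inv S hdet]

theorem mul_transpose_mul_pinv_psqrt_eq_mul_polarFactor [Fintype κ] (R C : Matrix κ ι ℝ)
    (hM : IsUnit (Rᵀ * C).det) :
    R * Rᵀ * C * pinv (psqrt (Cᵀ * (R * Rᵀ) * C)) = R * polarFactor (Rᵀ * C) := by
  have hCBC : Cᵀ * (R * Rᵀ) * C = (Rᵀ * C)ᵀ * (Rᵀ * C) := by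
    simp only [transpose_mul, transpose_transpose, Matrix.mul_assoc]
  rw [hCBC, pinv_eq_inv (isUnit_det_psqrt_transpose_mul_self hM), polarFactor]
  simp only [Matrix.mul_assoc]

theorem fromBlocks_eq_fromRows_mul_transpose {U : Matrix ι ι ℝ} (hU : Uᵀ * U = 1)
    (R : Matrix κ ι ℝ) :
    fromBlocks 1 (R * U)ᵀ (R * U) (R * Rᵀ) = fromRows Uᵀ R * (fromRows Uᵀ R)ᵀ := by
  rw [transpose_fromRows, fromRows_mul_fromCols, transpose_transpose, hU, transpose_mul]

end

theorem rcd_update_rank3_general {m : ℕ}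
    (Rs' : Fin m → Matrix (Fin 3) (Fin 3) ℝ)
    (hRs' : ∀ i, (Rs' i)ᵀ * Rs' i = 1)
    (C : Matrix (Fin m × Fin 3) (Fin 3) ℝ)
    (hM : IsUnit ((stack Rs')ᵀ * C).det) :
    letI R' := stack Rs'
    letI B := R' * R'ᵀ
    letI M := R'ᵀ * C
    letI U := M * (psqrt (Mᵀ * M))⁻¹
    letI Xstar := B * C * pinv (psqrt (Cᵀ * B * C))
    Uᵀ * U = 1 ∧
    Xstar = R' * U ∧
    fromBlocks (1 : Matrix (Fin 3) (Fin 3) ℝ) Xstarᵀ Xstar B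
      = fromRows Uᵀ R' * (fromRows Uᵀ R')ᵀ ∧
    (Uᵀ)ᵀ * Uᵀ = 1 ∧ ∀ i, (Rs' i)ᵀ * Rs' i = 1 := by
  have hU := polarFactor_transpose_mul_self hM
  have hX := mul_transpose_mul_pinv_psqrt_eq_mul_polarFactor (stack Rs') C hM
  refine ⟨hU, hX, ?_, ?_, hRs'⟩
  · rw [hX]
    exact fromBlocks_eq_fromRows_mul_transpose hU _
  · rw [transpose_transpose]
    exact mul_eq_one_comm.mp hU

/-- Explicit rank-3 preservation of the BCD/RCD update (Corollary 1 made concrete).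
With `R'` the stacking of orthogonal `R'₁,…,R'ₘ` (`m = n − 1 ≥ 1`), `B = R' R'ᵀ`,
`M = R'ᵀ C` invertible, `X* = B C ((Cᵀ B C)^{1/2})^†` and `U = M (Mᵀ M)^{−1/2}`:
(a) `U` is orthogonal; (b) `X* = R' U`; (c) `[[I₃, X*ᵀ],[X*, B]] = Q Qᵀ` where `Q`
stacks `Q₁ = Uᵀ` and `Q_{i+1} = R'_i`, all blocks orthogonal. -/
theorem rcd_update_rank3 {m : ℕ} (hm : 1 ≤ m)
    (Rs' : Fin m → Matrix (Fin 3) (Fin 3) ℝ)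
    (hRs' : ∀ i, (Rs' i)ᵀ * Rs' i = 1)
    (C : Matrix (Fin m × Fin 3) (Fin 3) ℝ)
    (hM : IsUnit ((stack Rs')ᵀ * C).det) :
    letI R' := stack Rs'
    letI B := R' * R'ᵀ
    letI M := R'ᵀ * C
    letI U := M * (psqrt (Mᵀ * M))⁻¹
    letI Xstar := B * C * pinv (psqrt (Cᵀ * B * C))
    Uᵀ * U = 1 ∧
    Xstar = R' * U ∧
    fromBlocks (1 : Matrix (Fin 3) (Fin 3) ℝ) Xstarᵀ Xstar B
      = fromRows Uᵀ R' * (fromRows Uᵀ R')ᵀ ∧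
    (Uᵀ)ᵀ * Uᵀ = 1 ∧ ∀ i, (Rs' i)ᵀ * Rs' i = 1 :=
  rcd_update_rank3_general Rs' hRs' C hM
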